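/- For every α ∈ (0,∞), β ∈ (0,∞) and c̃ ∈ (0,∞), one has φ_{α,β,c̃}(t) > 0 for all t ≠ 1, and φ_{α,β,c̃}(t) → +∞ as t → +∞ as well as φ_{α,β,c̃}(t) → +∞ as t → −∞. -/
import Mathlib

/-- The generator φ_{α,β,c̃} from Broniatowski & Stummer. -/
noncomputable def phi (α β c t : ℝ) : ℝ :=
  if t = 1 then 0
  else c * α * (Real.sqrt (1 + β ^ 2 * ((1 - t) / α) ^ 2) - 1 +
    Real.log (2 * (Real.sqrt (1 + β ^ 2 * ((1 - t) / α) ^ 2) - 1) /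
      (β ^ 2 * ((1 - t) / α) ^ 2)))

lemma phi_key {u : ℝ} (hu : 0 < u) :
    Real.sqrt (1 + u) - 1 + Real.log (2 * (Real.sqrt (1 + u) - 1) / u) =
    Real.sqrt (1 + u) - 1 - Real.log ((Real.sqrt (1 + u) + 1) / 2) := by
  have hs : Real.sqrt (1 + u) ^ 2 = 1 + u := Real.sq_sqrt (by linarith)
  have hnn : 0 ≤ Real.sqrt (1 + u) := Real.sqrt_nonneg _
  have hsp : 0 < Real.sqrt (1 + u) + 1 := by linarith
  have h2 : 2 * (Real.sqrt (1 + u) - 1) / u = ((Real.sqrt (1 + u) + 1) / 2)⁻¹ := by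
    rw [inv_div, div_eq_div_iff hu.ne' hsp.ne']
    nlinarith
  rw [h2, Real.log_inv]
  ring

lemma phi_eq (α β c : ℝ) (hα : 0 < α) (hβ : 0 < β) (t : ℝ) :
    phi α β c t = c * α * (Real.sqrt (1 + β ^ 2 * ((1 - t) / α) ^ 2) - 1 -
      Real.log ((Real.sqrt (1 + β ^ 2 * ((1 - t) / α) ^ 2) + 1) / 2)) := by
  unfold phi
  by_cases ht : t = 1
  · subst ht
    simp
  · have h0 : (1 - t) / α ≠ 0 := div_ne_zero (sub_ne_zero.2 fun h => ht (by linarith)) hα.ne'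
    have hu : 0 < β ^ 2 * ((1 - t) / α) ^ 2 :=
      mul_pos (pow_pos hβ 2) (lt_of_le_of_ne (sq_nonneg _) (Ne.symm (pow_ne_zero 2 h0)))
    rw [if_neg ht, phi_key hu]

lemma sqrt_gt_one {u : ℝ} (hu : 0 < u) : 1 < Real.sqrt (1 + u) := by
  nlinarith [Real.sq_sqrt (show (0:ℝ) ≤ 1 + u by linarith), Real.sqrt_nonneg (1 + u)]

lemma inner_pos {u : ℝ} (hu : 0 < u) :
    0 < Real.sqrt (1 + u) - 1 - Real.log ((Real.sqrt (1 + u) + 1) / 2) := by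
  have hs := sqrt_gt_one hu
  have hlog : Real.log ((Real.sqrt (1 + u) + 1) / 2) < (Real.sqrt (1 + u) + 1) / 2 - 1 :=
    Real.log_lt_sub_one_of_pos (by linarith) (by intro h; nlinarith)
  linarith

lemma inner_ge {u : ℝ} (hu : 0 ≤ u) :
    (Real.sqrt (1 + u) - 1) / 2 ≤
      Real.sqrt (1 + u) - 1 - Real.log ((Real.sqrt (1 + u) + 1) / 2) := by
  have hs : 1 ≤ Real.sqrt (1 + u) := by
    nlinarith [Real.sq_sqrt (show (0:ℝ) ≤ 1 + u by linarith), Real.sqrt_nonneg (1 + u)]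
  have hlog : Real.log ((Real.sqrt (1 + u) + 1) / 2) ≤ (Real.sqrt (1 + u) + 1) / 2 - 1 :=
    Real.log_le_sub_one_of_pos (by linarith)
  linarith

lemma phi_lower (α β c : ℝ) (hα : 0 < α) (hβ : 0 < β) (hc : 0 < c) (t : ℝ) :
    c * α / 2 * (β / α * |1 - t| - 1) ≤ phi α β c t := by
  rw [phi_eq α β c hα hβ t]
  set u := β ^ 2 * ((1 - t) / α) ^ 2 with hu
  have hu0 : 0 ≤ u := by positivity
  have h1 : Real.sqrt u ≤ Real.sqrt (1 + u) := Real.sqrt_le_sqrt (by linarith)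
  have h2 : Real.sqrt u = β / α * |1 - t| := by
    have : u = (β / α * |1 - t|) ^ 2 := by
      rw [mul_pow, sq_abs, hu, div_pow, div_pow]; ring
    rw [this, Real.sqrt_sq (by positivity)]
  have h3 := inner_ge hu0
  have hca : 0 < c * α := mul_pos hc hα
  calc c * α / 2 * (β / α * |1 - t| - 1)
      ≤ c * α / 2 * (Real.sqrt (1 + u) - 1) := by
        apply mul_le_mul_of_nonneg_left _ (by positivity)
        rw [← h2]; linarith
    _ = c * α * ((Real.sqrt (1 + u) - 1) / 2) := by ring
    _ ≤ _ := mul_le_mul_of_nonneg_left h3 (by positivity)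

theorem stmt_14 (α β c : ℝ) (hα : 0 < α) (hβ : 0 < β) (hc : 0 < c) :
    (∀ t : ℝ, t ≠ 1 → 0 < phi α β c t) ∧
    Filter.Tendsto (phi α β c) Filter.atTop Filter.atTop ∧
    Filter.Tendsto (phi α β c) Filter.atBot Filter.atTop := by
  refine ⟨fun t ht => ?_, ?_, ?_⟩
  · rw [phi_eq α β c hα hβ t]
    have h0 : (1 - t) / α ≠ 0 := div_ne_zero (sub_ne_zero.2 fun h => ht (by linarith)) hα.ne'
    have hu : 0 < β ^ 2 * ((1 - t) / α) ^ 2 :=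
      mul_pos (pow_pos hβ 2) (lt_of_le_of_ne (sq_nonneg _) (Ne.symm (pow_ne_zero 2 h0)))
    exact mul_pos (mul_pos hc hα) (inner_pos hu)
  · apply Filter.tendsto_atTop_mono (phi_lower α β c hα hβ hc)
    have h1 : Filter.Tendsto (fun t : ℝ => 1 - t) Filter.atTop Filter.atBot := by
      simpa [sub_eq_add_neg] using
        Filter.tendsto_atBot_add_const_left Filter.atTop (1:ℝ) Filter.tendsto_neg_atTop_atBot
    have h2 : Filter.Tendsto (fun t : ℝ => |1 - t|) Filter.atTop Filter.atTop :=
      Filter.tendsto_abs_atBot_atTop.comp h1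
    have h3 := h2.const_mul_atTop (div_pos hβ hα)
    have h4 := Filter.tendsto_atTop_add_const_right _ (-1 : ℝ) h3
    have h5 := h4.const_mul_atTop (show (0:ℝ) < c * α / 2 by positivity)
    exact Filter.Tendsto.congr (fun t => by ring) h5
  · apply Filter.tendsto_atTop_mono (phi_lower α β c hα hβ hc)
    have h1 : Filter.Tendsto (fun t : ℝ => 1 - t) Filter.atBot Filter.atTop := by
      simpa [sub_eq_add_neg] using
        Filter.tendsto_atTop_add_const_left Filter.atBot (1:ℝ) Filter.tendsto_neg_atBot_atTop
    have h2 : Filter.Tendsto (fun t : ℝ => |1 - t|) Filter.atBot Filter.atTop :=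
      Filter.tendsto_abs_atTop_atTop.comp h1
    have h3 := h2.const_mul_atTop (div_pos hβ hα)
    have h4 := Filter.tendsto_atTop_add_const_right _ (-1 : ℝ) h3
    have h5 := h4.const_mul_atTop (show (0:ℝ) < c * α / 2 by positivity)
    exact Filter.Tendsto.congr (fun t => by ring) h5
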